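/- arXiv:1507.04473 — 3 statements merged into one kernel-verified Lean document; each statement's English description precedes it below -/
import Mathlib

section
/- Let V be a finite-dimensional real inner product space with three orthogonal complex structures I, J, K (each squaring to -id, each an isometry) satisfying IJ = -JI = K, JK = -KJ = I, KI = -IK = J. If W is a subspace of V such that I(W), J(W), K(W) are all contained in the orthogonal complement of W, then dim W < dim W^⊥; in particular one cannot have dim W = (1/2) dim V. -/
/-!
If `W` is sent into `Wᗮ` by `I`, `J` and `K = IJ`, then `I(W)` and `J(W)` are orthogonal:
`I` is skew-adjoint, so `⟪I x, J y⟫ = -⟪x, K y⟫ = 0`. Hence `Wᗮ` contains the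
`2 dim W`-dimensional space `I(W) ⊕ J(W)`, which gives `dim W < dim Wᗮ` for `W ≠ 0`,
while for `W = 0` we have `Wᗮ = V ≠ 0`.
-/

open RealInnerProductSpace Module Submodule

theorem injective_of_apply_apply_eq_neg {E : Type*} [AddGroup E] {f : E → E}
    (hf : ∀ x, f (f x) = -x) : Function.Injective f := fun x y h => by
  simpa [hf] using congrArg f h

theorem inner_apply_left_eq_neg_inner_apply_right {𝕜 E : Type*} [RCLike 𝕜]
    [NormedAddCommGroup E] [InnerProductSpace 𝕜 E] {f : E → E}
    (hf2 : ∀ x, f (f x) = -x) (hf : ∀ x y, inner 𝕜 (f x) (f y) = inner 𝕜 x y) (x y : E) :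
    inner 𝕜 (f x) y = -inner 𝕜 x (f y) := by
  rw [← hf, hf2, inner_neg_left]

theorem Submodule.finrank_sup_of_isOrtho {𝕜 E : Type*} [RCLike 𝕜]
    [NormedAddCommGroup E] [InnerProductSpace 𝕜 E] {U V : Submodule 𝕜 E}
    [FiniteDimensional 𝕜 U] [FiniteDimensional 𝕜 V] (h : U ⟂ V) :
    finrank 𝕜 ↥(U ⊔ V) = finrank 𝕜 U + finrank 𝕜 V := by
  have := finrank_sup_add_finrank_inf_eq U V
  rwa [h.disjoint.eq_bot, finrank_bot, add_zero] at this

theorem Submodule.isOrtho_map_map_of_map_comp_le_orthogonal {𝕜 E : Type*} [RCLike 𝕜]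
    [NormedAddCommGroup E] [InnerProductSpace 𝕜 E] {I J : E →ₗ[𝕜] E}
    (hI2 : ∀ x, I (I x) = -x) (hI : ∀ x y, inner 𝕜 (I x) (I y) = inner 𝕜 x y)
    {W : Submodule 𝕜 E} (hIJW : W.map (I ∘ₗ J) ≤ Wᗮ) : W.map I ⟂ W.map J := by
  rintro _ ⟨x, hx, rfl⟩ _ ⟨y, hy, rfl⟩
  rw [inner_eq_zero_symm, inner_apply_left_eq_neg_inner_apply_right hI2 hI]
  exact neg_eq_zero.mpr (hIJW ⟨y, hy, rfl⟩ x hx)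

theorem hAntiInvariant_subspace_not_half_dim_general
    {V : Type} [NormedAddCommGroup V] [InnerProductSpace ℝ V]
    [FiniteDimensional ℝ V] [Nontrivial V]
    (I J K : V →ₗ[ℝ] V)
    (hI2 : ∀ x, I (I x) = -x) (hJ2 : ∀ x, J (J x) = -x)
    (hIiso : ∀ x y, ⟪I x, I y⟫ = ⟪x, y⟫)
    (hIJ : ∀ x, I (J x) = K x)
    (W : Submodule ℝ V)
    (hIW : W.map I ≤ Wᗮ) (hJW : W.map J ≤ Wᗮ) (hKW : W.map K ≤ Wᗮ) :
    Module.finrank ℝ W < Module.finrank ℝ Wᗮ ∧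
      2 * Module.finrank ℝ W ≠ Module.finrank ℝ V := by
  have hIJW : W.map I ⟂ W.map J :=
    isOrtho_map_map_of_map_comp_le_orthogonal hI2 hIiso ((LinearMap.ext hIJ : I ∘ₗ J = K) ▸ hKW)
  have hdim : 2 * finrank ℝ W ≤ finrank ℝ Wᗮ :=
    calc 2 * finrank ℝ W = finrank ℝ (W.map I) + finrank ℝ (W.map J) := by
          rw [← (equivMapOfInjective I (injective_of_apply_apply_eq_neg hI2) W).finrank_eq,
            ← (equivMapOfInjective J (injective_of_apply_apply_eq_neg hJ2) W).finrank_eq, two_mul]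
      _ = finrank ℝ ↥(W.map I ⊔ W.map J) := (finrank_sup_of_isOrtho hIJW).symm
      _ ≤ finrank ℝ Wᗮ := finrank_mono (sup_le hIW hJW)
  have hdim_sum := W.finrank_add_finrank_orthogonal
  have hV_pos : 0 < finrank ℝ V := finrank_pos
  omega

/-- Remark 3.3: in a nontrivial finite-dimensional real inner product space with
a quaternionic Hermitian structure (I, J, K), a subspace `W` with
`I(W), J(W), K(W) ⊆ W^⊥` satisfies `dim W < dim W^⊥`; in particular `W` cannot
be half-dimensional. -/
theorem hAntiInvariant_subspace_not_half_dim
    {V : Type} [NormedAddCommGroup V] [InnerProductSpace ℝ V]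
    [FiniteDimensional ℝ V] [Nontrivial V]
    (I J K : V →ₗ[ℝ] V)
    (hI2 : ∀ x, I (I x) = -x) (hJ2 : ∀ x, J (J x) = -x) (hK2 : ∀ x, K (K x) = -x)
    (hIiso : ∀ x y, ⟪I x, I y⟫ = ⟪x, y⟫)
    (hJiso : ∀ x y, ⟪J x, J y⟫ = ⟪x, y⟫)
    (hKiso : ∀ x y, ⟪K x, K y⟫ = ⟪x, y⟫)
    (hIJ : ∀ x, I (J x) = K x) (hJI : ∀ x, J (I x) = -K x)
    (hJK : ∀ x, J (K x) = I x) (hKJ : ∀ x, K (J x) = -I x)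
    (hKI : ∀ x, K (I x) = J x) (hIK : ∀ x, I (K x) = -J x)
    (W : Submodule ℝ V)
    (hIW : W.map I ≤ Wᗮ) (hJW : W.map J ≤ Wᗮ) (hKW : W.map K ≤ Wᗮ) :
    Module.finrank ℝ W < Module.finrank ℝ Wᗮ ∧
      2 * Module.finrank ℝ W ≠ Module.finrank ℝ V :=
  hAntiInvariant_subspace_not_half_dim_general I J K hI2 hJ2 hIiso hIJ W hIW hJW hKW
end

section
/- Let F be a h-Lagrangian submersion from a hyperkähler manifold (M, I, J, K, g_M) onto a Riemannian manifold (N, g_N) with h-Lagrangian basis (I, J, K). Then the following are equivalent: (a) the horizontal distribution (ker F_*)^⊥ is integrable; (b) A_X(IY) = A_Y(IX) for all horizontal X, Y; (c) A_X(KY) = A_Y(KX) for all horizontal X, Y; (d) A_X(JY) = A_Y(JX) for all horizontal X, Y. -/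
/- A synthetic (Koszul-algebraic) model of the geometry of a Riemannian submersion
`F : (M, g_M) → (N, g_N)`:
`Fn` plays the role of the ring of smooth functions on the total space `M`,
`VF` the `Fn`-module of vector fields on `M`, `g` the Riemannian metric `g_M`,
`nabla` its Levi-Civita connection, `bracket` the Lie bracket, `deriv` the
action of vector fields on functions, and `vp` the orthogonal projection onto
the vertical distribution `ker F_*` (so `hp = id - vp` is the horizontal
projection onto `(ker F_*)^⊥`). -/

variable {Fn : Type} [CommRing Fn] [Algebra ℝ Fn]
variable {VF : Type} [AddCommGroup VF] [Module Fn VF] [Module ℝ VF] [IsScalarTower ℝ Fn VF]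

/-- The horizontal projection `H = id - V`. -/
def hp (vp : VF →ₗ[Fn] VF) (X : VF) : VF := X - vp X

/-- A vector field is vertical if it is fixed by the vertical projection. -/
def IsVertical (vp : VF →ₗ[Fn] VF) (X : VF) : Prop := vp X = X

/-- A vector field is horizontal if it is killed by the vertical projection. -/
def IsHorizontal (vp : VF →ₗ[Fn] VF) (X : VF) : Prop := vp X = 0

/-- The O'Neill tensor `T_U V = H∇_{VU}VV + V∇_{VU}HV`. -/
def Tten (nabla : VF → VF → VF) (vp : VF →ₗ[Fn] VF) (U V : VF) : VF :=
  hp vp (nabla (vp U) (vp V)) + vp (nabla (vp U) (hp vp V))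

/-- The O'Neill tensor `A_U V = H∇_{HU}VV + V∇_{HU}HV`. -/
def Aten (nabla : VF → VF → VF) (vp : VF →ₗ[Fn] VF) (U V : VF) : VF :=
  hp vp (nabla (hp vp U) (vp V)) + vp (nabla (hp vp U) (hp vp V))

/-- Integrability of the horizontal distribution `(ker F_*)^⊥`. -/
def HorIntegrable (bracket : VF → VF → VF) (vp : VF →ₗ[Fn] VF) : Prop :=
  ∀ X Y : VF, IsHorizontal vp X → IsHorizontal vp Y → vp (bracket X Y) = 0

/-! For horizontal `X, Y` the O'Neill tensor reduces to `A_X Y = V∇_X Y`, so by torsion-freeness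
the horizontal distribution is integrable iff `A` is symmetric on horizontal pairs. A parallel
endomorphism `P` that exchanges (like `I`, `K`) or preserves (like `J`) the vertical and horizontal
distributions satisfies `A_X (P Y) = P (A_X Y)`, and `P² = -1` makes `P` injective; hence the
symmetry of `(X, Y) ↦ A_X (P Y)` is the symmetry of `A`. -/

theorem injective_of_apply_apply_eq_neg_s12 {G : Type*} [InvolutiveNeg G] {P : G → G}
    (hP : ∀ x, P (P x) = -x) : Function.Injective P :=
  fun a b hab => neg_injective (by rw [← hP, ← hP, hab])

section ONeillTensor

variable {R M : Type} [CommRing R] [AddCommGroup M] [Module R M] {vp : M →ₗ[R] M}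

theorem isHorizontal_hp (hvp : ∀ X, vp (vp X) = vp X) (Z : M) : IsHorizontal vp (hp vp Z) := by
  rw [IsHorizontal, hp, map_sub, hvp, sub_self]

theorem apply_eq_apply_vp_add_apply_hp (P : M →ₗ[R] M) (Z : M) :
    P Z = P (vp Z) + P (hp vp Z) := by
  rw [← map_add, hp, add_sub_cancel]

theorem hp_apply_of_swaps (hvp : ∀ X, vp (vp X) = vp X) {P : M →ₗ[R] M}
    (hPv : ∀ V, IsVertical vp V → IsHorizontal vp (P V))
    (hPh : ∀ X, IsHorizontal vp X → IsVertical vp (P X)) (Z : M) :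
    hp vp (P Z) = P (vp Z) := by
  have hvpP : vp (P Z) = P (hp vp Z) := by
    rw [apply_eq_apply_vp_add_apply_hp P Z, map_add, hPv _ (hvp Z),
      hPh _ (isHorizontal_hp hvp Z), zero_add]
  rw [hp, hvpP, apply_eq_apply_vp_add_apply_hp (vp := vp) P Z, add_sub_cancel_right]

theorem vp_apply_of_preserves (hvp : ∀ X, vp (vp X) = vp X) {P : M →ₗ[R] M}
    (hPv : ∀ V, IsVertical vp V → IsVertical vp (P V))
    (hPh : ∀ X, IsHorizontal vp X → IsHorizontal vp (P X)) (Z : M) :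
    vp (P Z) = P (vp Z) := by
  rw [apply_eq_apply_vp_add_apply_hp P Z, map_add, hPv _ (hvp Z),
    hPh _ (isHorizontal_hp hvp Z), add_zero]

variable {nabla : M → M → M}

theorem Aten_of_isHorizontal (hn0 : ∀ X, nabla X 0 = 0) {X Y : M}
    (hX : IsHorizontal vp X) (hY : IsHorizontal vp Y) :
    Aten nabla vp X Y = vp (nabla X Y) := by
  rw [IsHorizontal] at hX hY
  simp [Aten, hp, hX, hY, hn0]

theorem Aten_of_isVertical (hn0 : ∀ X, nabla X 0 = 0) {X V : M}
    (hX : IsHorizontal vp X) (hV : IsVertical vp V) :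
    Aten nabla vp X V = hp vp (nabla X V) := by
  rw [IsHorizontal] at hX
  rw [IsVertical] at hV
  simp [Aten, hp, hX, hV, hn0]

theorem Aten_apply_of_swaps (hvp : ∀ X, vp (vp X) = vp X) (hn0 : ∀ X, nabla X 0 = 0)
    {P : M →ₗ[R] M} (hPpar : ∀ X Y, nabla X (P Y) = P (nabla X Y))
    (hPv : ∀ V, IsVertical vp V → IsHorizontal vp (P V))
    (hPh : ∀ X, IsHorizontal vp X → IsVertical vp (P X)) {X Y : M}
    (hX : IsHorizontal vp X) (hY : IsHorizontal vp Y) :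
    Aten nabla vp X (P Y) = P (Aten nabla vp X Y) := by
  rw [Aten_of_isVertical hn0 hX (hPh Y hY), hPpar, hp_apply_of_swaps hvp hPv hPh,
    Aten_of_isHorizontal hn0 hX hY]

theorem Aten_apply_of_preserves (hvp : ∀ X, vp (vp X) = vp X) (hn0 : ∀ X, nabla X 0 = 0)
    {P : M →ₗ[R] M} (hPpar : ∀ X Y, nabla X (P Y) = P (nabla X Y))
    (hPv : ∀ V, IsVertical vp V → IsVertical vp (P V))
    (hPh : ∀ X, IsHorizontal vp X → IsHorizontal vp (P X)) {X Y : M}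
    (hX : IsHorizontal vp X) (hY : IsHorizontal vp Y) :
    Aten nabla vp X (P Y) = P (Aten nabla vp X Y) := by
  rw [Aten_of_isHorizontal hn0 hX (hPh Y hY), hPpar, vp_apply_of_preserves hvp hPv hPh,
    Aten_of_isHorizontal hn0 hX hY]

variable {bracket : M → M → M}

theorem horIntegrable_iff_Aten_symm (hn0 : ∀ X, nabla X 0 = 0)
    (h_torsion : ∀ X Y, nabla X Y - nabla Y X = bracket X Y) :
    HorIntegrable bracket vp ↔ ∀ X Y : M, IsHorizontal vp X → IsHorizontal vp Y →
      Aten nabla vp X Y = Aten nabla vp Y X := by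
  refine forall₄_congr fun X Y hX hY => ?_
  rw [← h_torsion, map_sub, sub_eq_zero, Aten_of_isHorizontal hn0 hX hY,
    Aten_of_isHorizontal hn0 hY hX]

theorem horIntegrable_iff_Aten_apply_symm (hn0 : ∀ X, nabla X 0 = 0)
    (h_torsion : ∀ X Y, nabla X Y - nabla Y X = bracket X Y) {P : M →ₗ[R] M}
    (hP : Function.Injective P)
    (hAP : ∀ X Y, IsHorizontal vp X → IsHorizontal vp Y →
      Aten nabla vp X (P Y) = P (Aten nabla vp X Y)) :
    HorIntegrable bracket vp ↔ ∀ X Y : M, IsHorizontal vp X → IsHorizontal vp Y →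
      Aten nabla vp X (P Y) = Aten nabla vp Y (P X) := by
  rw [horIntegrable_iff_Aten_symm hn0 h_torsion]
  refine forall₄_congr fun X Y hX hY => ?_
  rw [hAP X Y hX hY, hAP Y X hY hX, hP.eq_iff]

end ONeillTensor

theorem hLagrangian_horizontal_integrable_iff_general
    (nabla : VF → VF → VF) (bracket : VF → VF → VF)
    (hn_addr : ∀ X Y Z, nabla X (Y + Z) = nabla X Y + nabla X Z)
    (h_torsion : ∀ X Y, nabla X Y - nabla Y X = bracket X Y)
    (vp : VF →ₗ[Fn] VF)
    (hvp_idem : ∀ X, vp (vp X) = vp X)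
    -- a quaternionic Hermitian basis (I, J, K)
    (I J K : VF →ₗ[Fn] VF)
    (hI2 : ∀ X, I (I X) = -X) (hJ2 : ∀ X, J (J X) = -X) (hK2 : ∀ X, K (K X) = -X)
    -- hyperkähler: I, J, K are parallel
    (hIpar : ∀ X Y, nabla X (I Y) = I (nabla X Y))
    (hJpar : ∀ X Y, nabla X (J Y) = J (nabla X Y))
    (hKpar : ∀ X Y, nabla X (K Y) = K (nabla X Y))
    -- F is h-Lagrangian: I(ker F_*) = (ker F_*)^⊥, J(ker F_*) = ker F_*,
    -- K(ker F_*) = (ker F_*)^⊥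
    (hLI : ∀ V, IsVertical vp V → IsHorizontal vp (I V))
    (hLI' : ∀ X, IsHorizontal vp X → IsVertical vp (I X))
    (hLJ : ∀ V, IsVertical vp V → IsVertical vp (J V))
    (hLJ' : ∀ X, IsHorizontal vp X → IsHorizontal vp (J X))
    (hLK : ∀ V, IsVertical vp V → IsHorizontal vp (K V))
    (hLK' : ∀ X, IsHorizontal vp X → IsVertical vp (K X))
 :
    (HorIntegrable bracket vp ↔ (∀ X Y : VF, IsHorizontal vp X → IsHorizontal vp Y →
        Aten nabla vp X (I Y) = Aten nabla vp Y (I X))) ∧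
    (HorIntegrable bracket vp ↔ (∀ X Y : VF, IsHorizontal vp X → IsHorizontal vp Y →
        Aten nabla vp X (K Y) = Aten nabla vp Y (K X))) ∧
    (HorIntegrable bracket vp ↔ (∀ X Y : VF, IsHorizontal vp X → IsHorizontal vp Y →
        Aten nabla vp X (J Y) = Aten nabla vp Y (J X))) := by
  have hn0 : ∀ X, nabla X 0 = 0 := fun X => by simpa using hn_addr X 0 0
  exact ⟨horIntegrable_iff_Aten_apply_symm hn0 h_torsion (injective_of_apply_apply_eq_neg_s12 hI2)
      fun _ _ => Aten_apply_of_swaps hvp_idem hn0 hIpar hLI hLI',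
    horIntegrable_iff_Aten_apply_symm hn0 h_torsion (injective_of_apply_apply_eq_neg_s12 hK2)
      fun _ _ => Aten_apply_of_swaps hvp_idem hn0 hKpar hLK hLK',
    horIntegrable_iff_Aten_apply_symm hn0 h_torsion (injective_of_apply_apply_eq_neg_s12 hJ2)
      fun _ _ => Aten_apply_of_preserves hvp_idem hn0 hJpar hLJ hLJ'⟩

/-- Lemma 3.9: for a h-Lagrangian submersion from a hyperkähler manifold the
following are equivalent: (a) the horizontal distribution is integrable;
(b) `A_X IY = A_Y IX`; (c) `A_X KY = A_Y KX`; (d) `A_X JY = A_Y JX`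
for all horizontal `X, Y`. -/
theorem hLagrangian_horizontal_integrable_iff
    (g : VF →ₗ[Fn] VF →ₗ[Fn] Fn)
    (hg_symm : ∀ X Y, g X Y = g Y X)
    (deriv : VF → Fn → Fn)
    (nabla : VF → VF → VF) (bracket : VF → VF → VF)
    (hn_addl : ∀ X Y Z, nabla (X + Y) Z = nabla X Z + nabla Y Z)
    (hn_smul : ∀ (f : Fn) X Y, nabla (f • X) Y = f • nabla X Y)
    (hn_addr : ∀ X Y Z, nabla X (Y + Z) = nabla X Y + nabla X Z)
    (hn_leib : ∀ X (f : Fn) Y, nabla X (f • Y) = deriv X f • Y + f • nabla X Y)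
    (h_compat : ∀ X Y Z, deriv X (g Y Z) = g (nabla X Y) Z + g Y (nabla X Z))
    (h_torsion : ∀ X Y, nabla X Y - nabla Y X = bracket X Y)
    (vp : VF →ₗ[Fn] VF)
    (hvp_idem : ∀ X, vp (vp X) = vp X)
    (hvp_sa : ∀ X Y, g (vp X) Y = g X (vp Y))
    -- a quaternionic Hermitian basis (I, J, K)
    (I J K : VF →ₗ[Fn] VF)
    (hI2 : ∀ X, I (I X) = -X) (hJ2 : ∀ X, J (J X) = -X) (hK2 : ∀ X, K (K X) = -X)
    (hIiso : ∀ X Y, g (I X) (I Y) = g X Y)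
    (hJiso : ∀ X Y, g (J X) (J Y) = g X Y)
    (hKiso : ∀ X Y, g (K X) (K Y) = g X Y)
    (hIJ : ∀ X, I (J X) = K X) (hJI : ∀ X, J (I X) = -K X)
    (hJK : ∀ X, J (K X) = I X) (hKJ : ∀ X, K (J X) = -I X)
    (hKI : ∀ X, K (I X) = J X) (hIK : ∀ X, I (K X) = -J X)
    -- hyperkähler: I, J, K are parallel
    (hIpar : ∀ X Y, nabla X (I Y) = I (nabla X Y))
    (hJpar : ∀ X Y, nabla X (J Y) = J (nabla X Y))
    (hKpar : ∀ X Y, nabla X (K Y) = K (nabla X Y))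
    -- F is h-Lagrangian: I(ker F_*) = (ker F_*)^⊥, J(ker F_*) = ker F_*,
    -- K(ker F_*) = (ker F_*)^⊥
    (hLI : ∀ V, IsVertical vp V → IsHorizontal vp (I V))
    (hLI' : ∀ X, IsHorizontal vp X → IsVertical vp (I X))
    (hLJ : ∀ V, IsVertical vp V → IsVertical vp (J V))
    (hLJ' : ∀ X, IsHorizontal vp X → IsHorizontal vp (J X))
    (hLK : ∀ V, IsVertical vp V → IsHorizontal vp (K V))
    (hLK' : ∀ X, IsHorizontal vp X → IsVertical vp (K X))
 :
    (HorIntegrable bracket vp ↔ (∀ X Y : VF, IsHorizontal vp X → IsHorizontal vp Y →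
        Aten nabla vp X (I Y) = Aten nabla vp Y (I X))) ∧
    (HorIntegrable bracket vp ↔ (∀ X Y : VF, IsHorizontal vp X → IsHorizontal vp Y →
        Aten nabla vp X (K Y) = Aten nabla vp Y (K X))) ∧
    (HorIntegrable bracket vp ↔ (∀ X Y : VF, IsHorizontal vp X → IsHorizontal vp Y →
        Aten nabla vp X (J Y) = Aten nabla vp Y (J X))) :=
  hLagrangian_horizontal_integrable_iff_general nabla bracket hn_addr h_torsion vp hvp_idem I J K
    hI2 hJ2 hK2 hIpar hJpar hKpar hLI hLI' hLJ hLJ' hLK hLK'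
end

section
/- Let F be a h-Lagrangian submersion from a hyperkähler manifold (M, I, J, K, g_M) onto a Riemannian manifold (N, g_N) with h-Lagrangian basis (I, J, K). Then the following are equivalent: (a) the vertical distribution ker F_* defines a totally geodesic foliation on M (∇_V W is vertical for all vertical V, W); (b) T_V(IX) = 0 for all horizontal X and vertical V; (c) T_V(KX) = 0 for all horizontal X and vertical V; (d) T_V(JX) = 0 for all horizontal X and vertical V. -/
/- A synthetic (Koszul-algebraic) model of the geometry of a Riemannian submersion
`F : (M, g_M) → (N, g_N)`:
`Fn` plays the role of the ring of smooth functions on the total space `M`,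
`VF` the `Fn`-module of vector fields on `M`, `g` the Riemannian metric `g_M`,
`nabla` its Levi-Civita connection, `bracket` the Lie bracket, `deriv` the
action of vector fields on functions, and `vp` the orthogonal projection onto
the vertical distribution `ker F_*` (so `hp = id - vp` is the horizontal
projection onto `(ker F_*)^⊥`). -/

variable {Fn : Type} [CommRing Fn] [Algebra ℝ Fn]
variable {VF : Type} [AddCommGroup VF] [Module Fn VF] [Module ℝ VF] [IsScalarTower ℝ Fn VF]

/-- The vertical distribution `ker F_*` defines a totally geodesic foliation. -/
def VertTotallyGeodesic (nabla : VF → VF → VF) (vp : VF →ₗ[Fn] VF) : Prop :=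
  ∀ V W : VF, IsVertical vp V → IsVertical vp W → IsVertical vp (nabla V W)

/-!
For vertical `V`, `T_V` sends a vertical `W` to `H∇_V W` and a horizontal `W` to `V∇_V W`.
Since `I² = K² = -1` and `I`, `K` exchange the two distributions, `IX` (resp. `KX`) runs over
all vertical fields as `X` runs over the horizontal ones, so (b) and (c) say literally that
`∇_V` preserves vertical fields, i.e. (a). Likewise `J` permutes the horizontal fields, so (d)
says that `∇_V` preserves horizontal fields; as `∇I = 0` and `I` exchanges the distributions,
this is again equivalent to (a).
-/

section

variable {R : Type} [CommRing R] {M : Type} [AddCommGroup M] [Module R M]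
variable {nabla : M → M → M} {vp : M →ₗ[R] M}

def VertPreservesHorizontal (nabla : M → M → M) (vp : M →ₗ[R] M) : Prop :=
  ∀ V X : M, IsVertical vp V → IsHorizontal vp X → IsHorizontal vp (nabla V X)

theorem hp_eq_zero_iff {X : M} : hp vp X = 0 ↔ IsVertical vp X :=
  sub_eq_zero.trans eq_comm

theorem IsHorizontal.neg {X : M} (hX : IsHorizontal vp X) : IsHorizontal vp (-X) := by
  rw [IsHorizontal, map_neg, hX, neg_zero]

theorem Tten_of_isVertical (h0 : ∀ X, nabla X 0 = 0) {V W : M}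
    (hV : IsVertical vp V) (hW : IsVertical vp W) :
    Tten nabla vp V W = hp vp (nabla V W) := by
  unfold IsVertical at hV hW
  simp only [Tten, hp, hV, hW, sub_self, h0, map_zero, add_zero]

theorem Tten_of_isHorizontal (h0 : ∀ X, nabla X 0 = 0) {V W : M}
    (hV : IsVertical vp V) (hW : IsHorizontal vp W) :
    Tten nabla vp V W = vp (nabla V W) := by
  unfold IsVertical at hV
  unfold IsHorizontal at hW
  simp only [Tten, hp, hV, hW, h0, map_zero, sub_self, sub_zero, zero_add]

variable {L : M →ₗ[R] M}

theorem exists_isHorizontal_map_eq (hL2 : ∀ X, L (L X) = -X) {P : M → Prop}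
    (hL : ∀ W, P W → IsHorizontal vp (L W)) {W : M} (hW : P W) :
    ∃ X, IsHorizontal vp X ∧ L X = W :=
  ⟨-L W, (hL W hW).neg, by rw [map_neg, hL2, neg_neg]⟩

theorem isHorizontal_of_isVertical_map (hL2 : ∀ X, L (L X) = -X)
    (hLV : ∀ V, IsVertical vp V → IsHorizontal vp (L V)) {Y : M}
    (hY : IsVertical vp (L Y)) : IsHorizontal vp Y := by
  simpa only [hL2, neg_neg] using (hLV _ hY).neg

theorem forall_Tten_map_eq_zero_iff_of_swap (h0 : ∀ X, nabla X 0 = 0)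
    (hL2 : ∀ X, L (L X) = -X)
    (hLV : ∀ V, IsVertical vp V → IsHorizontal vp (L V))
    (hLH : ∀ X, IsHorizontal vp X → IsVertical vp (L X)) :
    (∀ X V : M, IsHorizontal vp X → IsVertical vp V → Tten nabla vp V (L X) = 0) ↔
      VertTotallyGeodesic nabla vp := by
  constructor
  · intro hT V W hV hW
    obtain ⟨X, hX, rfl⟩ := exists_isHorizontal_map_eq hL2 hLV hW
    rw [← hp_eq_zero_iff, ← Tten_of_isVertical h0 hV (hLH X hX)]
    exact hT X V hX hV
  · intro hTG X V hX hV
    rw [Tten_of_isVertical h0 hV (hLH X hX), hp_eq_zero_iff]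
    exact hTG V _ hV (hLH X hX)

theorem forall_Tten_map_eq_zero_iff_of_preserves (h0 : ∀ X, nabla X 0 = 0)
    (hL2 : ∀ X, L (L X) = -X) (hLH : ∀ X, IsHorizontal vp X → IsHorizontal vp (L X)) :
    (∀ X V : M, IsHorizontal vp X → IsVertical vp V → Tten nabla vp V (L X) = 0) ↔
      VertPreservesHorizontal nabla vp := by
  constructor
  · intro hT V X hV hX
    obtain ⟨Y, hY, rfl⟩ := exists_isHorizontal_map_eq hL2 hLH hX
    exact (Tten_of_isHorizontal h0 hV (hLH Y hY)).symm.trans (hT Y V hY hV)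
  · intro hP X V hX hV
    rw [Tten_of_isHorizontal h0 hV (hLH X hX)]
    exact hP V _ hV (hLH X hX)

theorem vertTotallyGeodesic_iff_of_parallel_swap (hL2 : ∀ X, L (L X) = -X)
    (hLpar : ∀ X Y, nabla X (L Y) = L (nabla X Y))
    (hLV : ∀ V, IsVertical vp V → IsHorizontal vp (L V))
    (hLH : ∀ X, IsHorizontal vp X → IsVertical vp (L X)) :
    VertTotallyGeodesic nabla vp ↔ VertPreservesHorizontal nabla vp := by
  constructor
  · intro hTG V X hV hX
    apply isHorizontal_of_isVertical_map hL2 hLV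
    rw [← hLpar]
    exact hTG V _ hV (hLH X hX)
  · intro hP V W hV hW
    obtain ⟨X, hX, rfl⟩ := exists_isHorizontal_map_eq hL2 hLV hW
    rw [hLpar]
    exact hLH _ (hP V X hV hX)

end

theorem hLagrangian_vertical_totally_geodesic_iff_general
    (nabla : VF → VF → VF)
    (hn_addr : ∀ X Y Z, nabla X (Y + Z) = nabla X Y + nabla X Z)
    (vp : VF →ₗ[Fn] VF)
    -- a quaternionic Hermitian basis (I, J, K)
    (I J K : VF →ₗ[Fn] VF)
    (hI2 : ∀ X, I (I X) = -X) (hJ2 : ∀ X, J (J X) = -X) (hK2 : ∀ X, K (K X) = -X)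
    -- hyperkähler: I, J, K are parallel
    (hIpar : ∀ X Y, nabla X (I Y) = I (nabla X Y))
    -- F is h-Lagrangian: I(ker F_*) = (ker F_*)^⊥, J(ker F_*) = ker F_*,
    -- K(ker F_*) = (ker F_*)^⊥
    (hLI : ∀ V, IsVertical vp V → IsHorizontal vp (I V))
    (hLI' : ∀ X, IsHorizontal vp X → IsVertical vp (I X))
    (hLJ' : ∀ X, IsHorizontal vp X → IsHorizontal vp (J X))
    (hLK : ∀ V, IsVertical vp V → IsHorizontal vp (K V))
    (hLK' : ∀ X, IsHorizontal vp X → IsVertical vp (K X))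
 :
    (VertTotallyGeodesic nabla vp ↔ (∀ X V : VF, IsHorizontal vp X → IsVertical vp V →
        Tten nabla vp V (I X) = 0)) ∧
    (VertTotallyGeodesic nabla vp ↔ (∀ X V : VF, IsHorizontal vp X → IsVertical vp V →
        Tten nabla vp V (K X) = 0)) ∧
    (VertTotallyGeodesic nabla vp ↔ (∀ X V : VF, IsHorizontal vp X → IsVertical vp V →
        Tten nabla vp V (J X) = 0)) := by
  have h0 : ∀ X, nabla X 0 = 0 := fun X => by simpa using hn_addr X 0 0
  refine ⟨(forall_Tten_map_eq_zero_iff_of_swap h0 hI2 hLI hLI').symm,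
    (forall_Tten_map_eq_zero_iff_of_swap h0 hK2 hLK hLK').symm, ?_⟩
  rw [vertTotallyGeodesic_iff_of_parallel_swap hI2 hIpar hLI hLI',
    forall_Tten_map_eq_zero_iff_of_preserves h0 hJ2 hLJ']

/-- Lemma 3.13: for a h-Lagrangian submersion from a hyperkähler manifold the
following are equivalent: (a) the vertical distribution defines a totally
geodesic foliation; (b) `T_V IX = 0`; (c) `T_V KX = 0`; (d) `T_V JX = 0`
for all horizontal `X` and vertical `V`. -/
theorem hLagrangian_vertical_totally_geodesic_iff
    (g : VF →ₗ[Fn] VF →ₗ[Fn] Fn)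
    (hg_symm : ∀ X Y, g X Y = g Y X)
    (deriv : VF → Fn → Fn)
    (nabla : VF → VF → VF) (bracket : VF → VF → VF)
    (hn_addl : ∀ X Y Z, nabla (X + Y) Z = nabla X Z + nabla Y Z)
    (hn_smul : ∀ (f : Fn) X Y, nabla (f • X) Y = f • nabla X Y)
    (hn_addr : ∀ X Y Z, nabla X (Y + Z) = nabla X Y + nabla X Z)
    (hn_leib : ∀ X (f : Fn) Y, nabla X (f • Y) = deriv X f • Y + f • nabla X Y)
    (h_compat : ∀ X Y Z, deriv X (g Y Z) = g (nabla X Y) Z + g Y (nabla X Z))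
    (h_torsion : ∀ X Y, nabla X Y - nabla Y X = bracket X Y)
    (vp : VF →ₗ[Fn] VF)
    (hvp_idem : ∀ X, vp (vp X) = vp X)
    (hvp_sa : ∀ X Y, g (vp X) Y = g X (vp Y))
    -- a quaternionic Hermitian basis (I, J, K)
    (I J K : VF →ₗ[Fn] VF)
    (hI2 : ∀ X, I (I X) = -X) (hJ2 : ∀ X, J (J X) = -X) (hK2 : ∀ X, K (K X) = -X)
    (hIiso : ∀ X Y, g (I X) (I Y) = g X Y)
    (hJiso : ∀ X Y, g (J X) (J Y) = g X Y)
    (hKiso : ∀ X Y, g (K X) (K Y) = g X Y)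
    (hIJ : ∀ X, I (J X) = K X) (hJI : ∀ X, J (I X) = -K X)
    (hJK : ∀ X, J (K X) = I X) (hKJ : ∀ X, K (J X) = -I X)
    (hKI : ∀ X, K (I X) = J X) (hIK : ∀ X, I (K X) = -J X)
    -- hyperkähler: I, J, K are parallel
    (hIpar : ∀ X Y, nabla X (I Y) = I (nabla X Y))
    (hJpar : ∀ X Y, nabla X (J Y) = J (nabla X Y))
    (hKpar : ∀ X Y, nabla X (K Y) = K (nabla X Y))
    -- F is h-Lagrangian: I(ker F_*) = (ker F_*)^⊥, J(ker F_*) = ker F_*,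
    -- K(ker F_*) = (ker F_*)^⊥
    (hLI : ∀ V, IsVertical vp V → IsHorizontal vp (I V))
    (hLI' : ∀ X, IsHorizontal vp X → IsVertical vp (I X))
    (hLJ : ∀ V, IsVertical vp V → IsVertical vp (J V))
    (hLJ' : ∀ X, IsHorizontal vp X → IsHorizontal vp (J X))
    (hLK : ∀ V, IsVertical vp V → IsHorizontal vp (K V))
    (hLK' : ∀ X, IsHorizontal vp X → IsVertical vp (K X))
 :
    (VertTotallyGeodesic nabla vp ↔ (∀ X V : VF, IsHorizontal vp X → IsVertical vp V →
        Tten nabla vp V (I X) = 0)) ∧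
    (VertTotallyGeodesic nabla vp ↔ (∀ X V : VF, IsHorizontal vp X → IsVertical vp V →
        Tten nabla vp V (K X) = 0)) ∧
    (VertTotallyGeodesic nabla vp ↔ (∀ X V : VF, IsHorizontal vp X → IsVertical vp V →
        Tten nabla vp V (J X) = 0)) :=
  hLagrangian_vertical_totally_geodesic_iff_general nabla hn_addr vp I J K hI2 hJ2 hK2 hIpar hLI
    hLI' hLJ' hLK hLK'
end
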